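/- arXiv:1909.10844 — 2 statements merged into one kernel-verified Lean document; each statement's English description precedes it below -/
import Mathlib

section
/- For every integer n ≥ 1, one has the polynomial identity B_{s_{0,n}}(t) = (t+1)·B_{p_{2,n}}(t) + t^2·\sum_{i=0}^{2n−1} t^i in ℤ[t]. -/
open Polynomial

/-- The Stern polynomials: `B 0 = 0`, `B 1 = 1`, `B (2n) = t * B n`,
`B (2n+1) = B n + B (n+1)`. -/
noncomputable def sternPoly : ℕ → Polynomial ℤ
  | 0 => 0
  | 1 => 1
  | n + 2 =>
    if h : (n + 2) % 2 = 0 then X * sternPoly ((n + 2) / 2)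
    else sternPoly ((n + 2) / 2) + sternPoly ((n + 2) / 2 + 1)
decreasing_by all_goals omega

/-- `s₀ n = 2^(2n+4) - 9·2^(n+1) - 1`. -/
def sSeq (n : ℕ) : ℕ := 2 ^ (2 * n + 4) - 9 * 2 ^ (n + 1) - 1

/-- `p 2 n = 2^(2n+2) - 3·2^(n+1) + 1`. -/
def pTwo (n : ℕ) : ℕ := 2 ^ (2 * n + 2) - 3 * 2 ^ (n + 1) + 1

lemma stern_even (m : ℕ) (hm : 1 ≤ m) : sternPoly (2 * m) = X * sternPoly m := by
  obtain ⟨k, rfl⟩ := Nat.exists_eq_add_of_le hm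
  have h1 : 2 * (1 + k) = (2 * k) + 2 := by ring
  rw [h1, sternPoly]
  rw [dif_pos (by omega : (2 * k + 2) % 2 = 0)]
  have h2 : (2 * k + 2) / 2 = 1 + k := by omega
  rw [h2]

lemma stern_odd (m : ℕ) (hm : 1 ≤ m) :
    sternPoly (2 * m + 1) = sternPoly m + sternPoly (m + 1) := by
  obtain ⟨k, rfl⟩ := Nat.exists_eq_add_of_le hm
  have h1 : 2 * (1 + k) + 1 = (2 * k + 1) + 2 := by ring
  rw [h1, sternPoly]
  rw [dif_neg (by omega : ¬ (2 * k + 1 + 2) % 2 = 0)]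
  have h2 : (2 * k + 1 + 2) / 2 = 1 + k := by omega
  rw [h2]

lemma stern_two_pow_mul (k m : ℕ) (hm : 1 ≤ m) :
    sternPoly (2 ^ k * m) = X ^ k * sternPoly m := by
  induction k with
  | zero => simp
  | succ k ih =>
    have h1 : 2 ^ (k + 1) * m = 2 * (2 ^ k * m) := by ring
    have h2 : 1 ≤ 2 ^ k * m := Nat.mul_pos (Nat.two_pow_pos k) hm
    rw [h1, stern_even _ h2, ih]
    ring

lemma stern_geom (j : ℕ) : sternPoly (2 ^ j - 1) = ∑ i ∈ Finset.range j, (X : Polynomial ℤ) ^ i := by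
  induction j with
  | zero => simp [sternPoly]
  | succ j ih =>
    rcases Nat.eq_zero_or_pos j with rfl | hj
    · simp [sternPoly]
    · have hj2 : (2:ℕ) ≤ 2 ^ j := by
        calc (2:ℕ) = 2 ^ 1 := by norm_num
        _ ≤ 2 ^ j := Nat.pow_le_pow_right (by norm_num) hj
      have h1 : 2 ^ (j + 1) - 1 = 2 * (2 ^ j - 1) + 1 := by
        have : (2:ℕ) ^ (j+1) = 2 * 2 ^ j := by ring
        omega
      have h2 : (2:ℕ) ^ j - 1 + 1 = 2 ^ j := by omega
      rw [h1, stern_odd _ (by omega), ih, h2]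
      have h3 : sternPoly (2 ^ j) = X ^ j := by
        have := stern_two_pow_mul j 1 le_rfl
        simpa [sternPoly] using this
      rw [h3, Finset.sum_range_succ]

lemma stern_pow_mul_add_one (k m : ℕ) (hk : 1 ≤ k) :
    sternPoly (2 ^ k * m + 1) =
      sternPoly (2 * m + 1) + sternPoly m * ∑ i ∈ Finset.Ico 1 k, (X : Polynomial ℤ) ^ i := by
  induction k, hk using Nat.le_induction with
  | base => norm_num
  | succ k hk ih =>
    rcases Nat.eq_zero_or_pos m with rfl | hm
    · have h0 : sternPoly 0 = 0 := by rw [sternPoly]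
      simp [h0]
    · have h1 : 2 ^ (k + 1) * m + 1 = 2 * (2 ^ k * m) + 1 := by ring
      have h2 : 1 ≤ 2 ^ k * m := Nat.mul_pos (Nat.two_pow_pos k) hm
      rw [h1, stern_odd _ h2, stern_two_pow_mul _ _ hm, ih,
        Finset.sum_Ico_succ_top hk]
      ring

lemma stern_pow_mul_sub_one (k m : ℕ) (hk : 1 ≤ k) (hm : 1 ≤ m) :
    sternPoly (2 ^ k * m - 1) =
      sternPoly (2 * m - 1) + sternPoly m * ∑ i ∈ Finset.Ico 1 k, (X : Polynomial ℤ) ^ i := by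
  induction k, hk using Nat.le_induction with
  | base => norm_num
  | succ k hk ih =>
    have hkm : 2 ≤ 2 ^ k * m := by
      calc 2 = 2 ^ 1 * 1 := by norm_num
      _ ≤ 2 ^ k * m := Nat.mul_le_mul (Nat.pow_le_pow_right (by norm_num) hk) hm
    have h1 : 2 ^ (k + 1) * m - 1 = 2 * (2 ^ k * m - 1) + 1 := by
      have : 2 ^ (k+1) * m = 2 * (2 ^ k * m) := by ring
      omega
    have h2 : 2 ^ k * m - 1 + 1 = 2 ^ k * m := by omega
    rw [h1, stern_odd _ (by omega), h2, stern_two_pow_mul _ _ hm, ih,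
      Finset.sum_Ico_succ_top hk]
    ring

lemma ico_sum_eq (k : ℕ) :
    ∑ i ∈ Finset.Ico 1 (k + 1), (X : Polynomial ℤ) ^ i
      = X * ∑ i ∈ Finset.range k, (X : Polynomial ℤ) ^ i := by
  rw [Finset.sum_Ico_eq_sum_range, Finset.mul_sum]
  simp [pow_add, pow_succ, mul_comm]

theorem stern_s_eq_stern_p (n : ℕ) (hn : 1 ≤ n) :
    sternPoly (sSeq n) =
      (X + 1) * sternPoly (pTwo n)
        + X ^ 2 * ∑ i ∈ Finset.range (2 * n), (X : Polynomial ℤ) ^ i := by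
  obtain ⟨m, rfl⟩ := Nat.exists_eq_add_of_le hn
  set g : Polynomial ℤ := ∑ i ∈ Finset.range (m + 1), (X : Polynomial ℤ) ^ i with hgdef
  set h : Polynomial ℤ := ∑ i ∈ Finset.range m, (X : Polynomial ℤ) ^ i with hhdef
  have hgh : g = h + X ^ m := by rw [hgdef, hhdef, Finset.sum_range_succ]
  have hp1 : (1:ℕ) ≤ 2 ^ m := Nat.one_le_two_pow
  have q1 : (2:ℕ) ^ (m + 1) = 2 * 2 ^ m := by ring
  have q2 : (2:ℕ) ^ (m + 2) = 4 * 2 ^ m := by ring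
  have q3 : (2:ℕ) ^ (m + 3) = 8 * 2 ^ m := by ring
  have q4 : (2:ℕ) ^ (m + 4) = 16 * 2 ^ m := by ring
  have q5 : (2:ℕ) ^ (m + 5) = 32 * 2 ^ m := by ring
  -- A1 : B(2^(m+2) - 2) = X * g
  have A1 : sternPoly (2 ^ (m + 2) - 2) = X * g := by
    have e : 2 ^ (m + 2) - 2 = 2 * (2 ^ (m + 1) - 1) := by omega
    rw [e, stern_even _ (by omega), stern_geom]
  -- A2 : B(2^(m+2) - 3) = g + X * h
  have A2 : sternPoly (2 ^ (m + 2) - 3) = g + X * h := by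
    have e : 2 ^ (m + 2) - 3 = 2 ^ 2 * (2 ^ m - 1) + 1 := by omega
    have e2 : 2 * (2 ^ m - 1) + 1 = 2 ^ (m + 1) - 1 := by omega
    rw [e, stern_pow_mul_add_one _ _ (by norm_num), e2, stern_geom, stern_geom]
    have e3 : Finset.Ico 1 2 = {1} := rfl
    simp only [e3, Finset.sum_singleton, pow_one]
    ring
  -- A3 : B(2^(m+3) - 5)
  have A3 : sternPoly (2 ^ (m + 3) - 5) = (g + X * h) + X * g := by
    have e : 2 ^ (m + 3) - 5 = 2 * (2 ^ (m + 2) - 3) + 1 := by omega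
    have e3 : 2 ^ (m + 2) - 3 + 1 = 2 ^ (m + 2) - 2 := by omega
    rw [e, stern_odd _ (by omega), e3, A2, A1]
  -- A4 : B(2^(m+4) - 9)
  have A4 : sternPoly (2 ^ (m + 4) - 9) = ((g + X * h) + X * g) + X * (X * g) := by
    have e : 2 ^ (m + 4) - 9 = 2 * (2 ^ (m + 3) - 5) + 1 := by omega
    have e3 : 2 ^ (m + 3) - 5 + 1 = 2 * (2 ^ (m + 2) - 2) := by omega
    rw [e, stern_odd _ (by omega), e3, stern_even _ (by omega), A3, A1]
  -- A5 : B(2^(m+5) - 19)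
  have A5 : sternPoly (2 ^ (m + 5) - 19)
      = X * ((g + X * h) + X * g) + (((g + X * h) + X * g) + X * (X * g)) := by
    have e : 2 ^ (m + 5) - 19 = 2 * (2 ^ (m + 4) - 10) + 1 := by omega
    have e3 : 2 ^ (m + 4) - 10 = 2 * (2 ^ (m + 3) - 5) := by omega
    have e4 : 2 ^ (m + 4) - 10 + 1 = 2 ^ (m + 4) - 9 := by omega
    rw [e, stern_odd _ (by omega), e4, e3, stern_even _ (by omega), A3, A4]
  -- pTwo
  have AP : sternPoly (pTwo (1 + m))
      = ((g + X * h) + X * g) + (g + X * h) * (X * g) := by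
    have e : pTwo (1 + m) = 2 ^ (m + 2) * (2 ^ (m + 2) - 3) + 1 := by
      have e1 : (2:ℕ) ^ (2 * (1 + m) + 2) = (4 * 2 ^ m) * (4 * 2 ^ m) := by ring
      have e2 : (2:ℕ) ^ ((1 + m) + 1) = 4 * 2 ^ m := by ring
      have e4 : (2:ℕ) ^ (m + 2) * (2 ^ (m + 2) - 3)
          = (4 * 2 ^ m) * (4 * 2 ^ m) - 3 * (4 * 2 ^ m) := by
        rw [q2, Nat.mul_sub]
        congr 1
        ring
      simp only [pTwo, e1, e2, e4]
    have e5 : 2 * (2 ^ (m + 2) - 3) + 1 = 2 ^ (m + 3) - 5 := by omega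
    rw [e, stern_pow_mul_add_one _ _ (by omega), e5, A3, A2, ico_sum_eq]
  -- sSeq
  have AS : sternPoly (sSeq (1 + m))
      = (X * ((g + X * h) + X * g) + (((g + X * h) + X * g) + X * (X * g)))
        + (((g + X * h) + X * g) + X * (X * g)) * (X * g) := by
    have e : sSeq (1 + m) = 2 ^ (m + 2) * (2 ^ (m + 4) - 9) - 1 := by
      have e1 : (2:ℕ) ^ (2 * (1 + m) + 4) = (4 * 2 ^ m) * (16 * 2 ^ m) := by ring
      have e2 : (2:ℕ) ^ ((1 + m) + 1) = 4 * 2 ^ m := by ring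
      have e4 : (2:ℕ) ^ (m + 2) * (2 ^ (m + 4) - 9)
          = (4 * 2 ^ m) * (16 * 2 ^ m) - 9 * (4 * 2 ^ m) := by
        rw [q2, q4, Nat.mul_sub]
        congr 1
        ring
      simp only [sSeq, e1, e2, e4]
    have e5 : 2 * (2 ^ (m + 4) - 9) - 1 = 2 ^ (m + 5) - 19 := by omega
    rw [e, stern_pow_mul_sub_one _ _ (by omega) (by omega), e5, A5, A4, ico_sum_eq]
  -- the range (2n) sum
  have hG2 : ∑ i ∈ Finset.range (2 * (1 + m)), (X : Polynomial ℤ) ^ i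
      = g + X ^ m * X * g := by
    have e : 2 * (1 + m) = (m + 1) + (m + 1) := by omega
    rw [e, Finset.sum_range_add]
    congr 1
    calc ∑ i ∈ Finset.range (m + 1), (X : Polynomial ℤ) ^ ((m + 1) + i)
        = ∑ i ∈ Finset.range (m + 1), (X ^ m * X) * (X : Polynomial ℤ) ^ i :=
          Finset.sum_congr rfl fun i _ => by rw [pow_add, pow_succ]
      _ = X ^ m * X * g := by rw [← Finset.mul_sum]
  rw [AS, AP, hG2]
  linear_combination (X ^ 3 * g) * hgh
end

section
/- For every natural number n, let H_n = h_{(3^n−1)/2} where h_m = (2/3)(2^{2m}−1)(2^{2m+1}+1) + 1 (an integer, since 3 divides 2^{2m}−1). Then the polynomial 3t(t+1) divides B_{H_n}(t) − 1 in ℤ[t]; in particular B_{H_n}(t) ≡ 1 (mod 3t(t+1)). -/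
open Polynomial

/-- `h m = (2/3)·(2^(2m)-1)·(2^(2m+1)+1) + 1`; the division by 3 is exact since
`3 ∣ 2^(2m) - 1`. -/
def hSeq (m : ℕ) : ℕ := 2 * (2 ^ (2 * m) - 1) * (2 ^ (2 * m + 1) + 1) / 3 + 1

/- ### Basic recurrences for the Stern polynomials -/

lemma st0 : sternPoly 0 = 0 := by simp [sternPoly]
lemma st1 : sternPoly 1 = 1 := by simp [sternPoly]

lemma sternPoly_two_mul (n : ℕ) (hn : n ≠ 0) : sternPoly (2*n) = X * sternPoly n := by
  obtain ⟨k, rfl⟩ : ∃ k, n = k+1 := ⟨n-1, by omega⟩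
  rw [show 2*(k+1) = k+k+2 by ring, sternPoly]
  rw [dif_pos (by omega : (k+k+2) % 2 = 0)]
  rw [show (k+k+2)/2 = k+1 by omega]

lemma sternPoly_odd (n : ℕ) (hn : n ≠ 0) :
    sternPoly (2*n+1) = sternPoly n + sternPoly (n+1) := by
  obtain ⟨k, rfl⟩ : ∃ k, n = k+1 := ⟨n-1, by omega⟩
  rw [show 2*(k+1)+1 = (k+k+1)+2 by ring, sternPoly]
  rw [dif_neg (by omega : ¬ (k+k+1+2) % 2 = 0)]
  rw [show (k+k+1+2)/2 = k+1 by omega]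

lemma st2 : sternPoly 2 = X := by
  rw [show (2:ℕ) = 2*1 from rfl, sternPoly_two_mul 1 one_ne_zero, st1, mul_one]

/- ### Evaluations at 0 and -1 -/

lemma sternPoly_eval_zero (n : ℕ) : (sternPoly n).eval 0 = if n % 2 = 1 then 1 else 0 := by
  induction n using Nat.strong_induction_on with
  | _ n ih =>
    match n with
    | 0 => simp [st0]
    | 1 => simp [st1]
    | (m+2) =>
      rcases Nat.even_or_odd (m+2) with he | ho
      · obtain ⟨k, hk⟩ := he
        have hk2 : m + 2 = 2*k := by omega
        rw [hk2, sternPoly_two_mul k (by omega)]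
        simp only [eval_mul, eval_X, zero_mul]
        rw [if_neg (by omega)]
      · obtain ⟨k, hk⟩ := ho
        have hk2 : m + 2 = 2*k+1 := by omega
        rw [hk2, sternPoly_odd k (by omega), eval_add,
          ih k (by omega), ih (k+1) (by omega)]
        rcases (show k % 2 = 0 ∨ k % 2 = 1 by omega) with hke | hko
        · rw [if_neg (by omega), if_pos (by omega), if_pos (by omega)]; ring
        · rw [if_pos (by omega), if_neg (by omega), if_pos (by omega)]; ring

lemma sternPoly_eval_neg_one (n : ℕ) :
    (sternPoly n).eval (-1) = if n % 3 = 0 then 0 else if n % 3 = 1 then 1 else -1 := by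
  induction n using Nat.strong_induction_on with
  | _ n ih =>
    match n with
    | 0 => simp [st0]
    | 1 => simp [st1]
    | (m+2) =>
      rcases Nat.even_or_odd (m+2) with he | ho
      · obtain ⟨k, hk⟩ := he
        have hk2 : m + 2 = 2*k := by omega
        rw [hk2, sternPoly_two_mul k (by omega)]
        simp only [eval_mul, eval_X]
        rw [ih k (by omega)]
        rcases (show k % 3 = 0 ∨ k % 3 = 1 ∨ k % 3 = 2 by omega) with h|h|h
        · rw [if_pos h, if_pos (by omega)]; ring
        · rw [if_neg (by omega), if_pos h, if_neg (by omega), if_neg (by omega)]; ring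
        · rw [if_neg (by omega), if_neg (by omega), if_neg (by omega), if_pos (by omega)]; ring
      · obtain ⟨k, hk⟩ := ho
        have hk2 : m + 2 = 2*k+1 := by omega
        rw [hk2, sternPoly_odd k (by omega), eval_add, ih k (by omega), ih (k+1) (by omega)]
        rcases (show k % 3 = 0 ∨ k % 3 = 1 ∨ k % 3 = 2 by omega) with h|h|h
        · rw [if_pos h, if_neg (by omega), if_pos (by omega), if_neg (by omega),
            if_pos (by omega)]; ring
        · rw [if_neg (by omega), if_pos h, if_neg (by omega), if_neg (by omega),
            if_pos (by omega)]; ring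
        · rw [if_neg (by omega), if_neg (by omega), if_pos (by omega), if_neg (by omega),
            if_neg (by omega)]; ring

/- ### Reduction mod 3 -/

noncomputable def S3 (n : ℕ) : Polynomial (ZMod 3) :=
  (sternPoly n).map (Int.castRingHom (ZMod 3))

lemma S3_zero : S3 0 = 0 := by simp [S3, st0]
lemma S3_one : S3 1 = 1 := by simp [S3, st1]
lemma S3_two : S3 2 = X := by simp [S3, st2]

lemma S3_even (n : ℕ) (hn : n ≠ 0) : S3 (2*n) = X * S3 n := by
  unfold S3
  rw [sternPoly_two_mul n hn, Polynomial.map_mul, Polynomial.map_X]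

lemma S3_odd (n : ℕ) (hn : n ≠ 0) : S3 (2*n+1) = S3 n + S3 (n+1) := by
  unfold S3
  rw [sternPoly_odd n hn, Polynomial.map_add]

lemma three_eq_zero : (3 : Polynomial (ZMod 3)) = 0 := by
  calc (3 : Polynomial (ZMod 3)) = Polynomial.C (3 : ZMod 3) := (map_ofNat _ 3).symm
  _ = 0 := by rw [show (3:ZMod 3) = 0 from by decide, map_zero]

lemma S3_step1 (n : ℕ) : S3 (4*n+1) = (1+X) * S3 n + S3 (n+1) := by
  match n with
  | 0 => rw [show 4*0+1 = 1 from rfl, S3_zero, S3_one]; ring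
  | (k+1) =>
    rw [show 4*(k+1)+1 = 2*(2*(k+1))+1 by ring, S3_odd (2*(k+1)) (by omega),
      S3_even (k+1) (by omega), S3_odd (k+1) (by omega)]
    ring

lemma S3_step2 (n : ℕ) : S3 (4*n+2) = X * S3 n + X * S3 (n+1) := by
  match n with
  | 0 => rw [show 4*0+2 = 2 from rfl, S3_two, S3_zero, S3_one]; ring
  | (k+1) =>
    rw [show 4*(k+1)+2 = 2*(2*(k+1)+1) by ring, S3_even (2*(k+1)+1) (by omega),
      S3_odd (k+1) (by omega)]
    ring

/- ### The index iteration n ↦ 4n+1 and the sequence m_j = (3^j-1)/2 -/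

def gIter : ℕ → ℕ → ℕ
  | 0, n => n
  | k+1, n => gIter k (4*n+1)

lemma gIter_zero (n : ℕ) : gIter 0 n = n := rfl
lemma gIter_one (n : ℕ) : gIter 1 n = 4*n+1 := rfl

lemma gIter_succ' (k : ℕ) : ∀ n, gIter (k+1) n = 4 * gIter k n + 1 := by
  induction k with
  | zero => intro n; rw [gIter_one, gIter_zero]
  | succ k ih =>
    intro n
    show gIter (k+1) (4*n+1) = _
    rw [ih (4*n+1)]
    rfl

lemma gIter_add (a b n : ℕ) : gIter (a+b) n = gIter a (gIter b n) := by
  induction a with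
  | zero => simp [gIter_zero]
  | succ a ih =>
    rw [show a+1+b = (a+b)+1 by omega, gIter_succ', ih, ← gIter_succ']

lemma gIter_formula (k : ℕ) : ∀ n, 3 * gIter k n + 1 = 4^k * (3*n+1) := by
  induction k with
  | zero => intro n; simp [gIter_zero]
  | succ k ih =>
    intro n
    rw [gIter_succ', pow_succ]
    calc 3*(4*gIter k n+1)+1 = 4*(3*gIter k n+1) := by ring
    _ = 4*(4^k*(3*n+1)) := by rw [ih]
    _ = 4^k*4*(3*n+1) := by ring

def mSeq : ℕ → ℕ
  | 0 => 0
  | j+1 => 3 * mSeq j + 1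

lemma mSeq_pow (j : ℕ) : 2 * mSeq j + 1 = 3^j := by
  induction j with
  | zero => rfl
  | succ j ih =>
    have h : (3:ℕ)^(j+1) = 3^j * 3 := pow_succ 3 j
    show 2*(3*mSeq j+1)+1 = 3^(j+1)
    omega

lemma four_pow (k : ℕ) : ∃ a, (4:ℕ)^k = 3*a+1 := by
  induction k with
  | zero => exact ⟨0, rfl⟩
  | succ k ih =>
    obtain ⟨a, ha⟩ := ih
    exact ⟨4*a+1, by rw [pow_succ, ha]; ring⟩

lemma hSeq_closed (m c : ℕ) (hc : 2^(2*m) = 3*c+1) : hSeq m = 12*(c*c)+6*c+1 := by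
  unfold hSeq
  rw [pow_succ, hc, show 3*c+1-1 = 3*c from rfl,
    show 2*(3*c)*((3*c+1)*2+1) = 3*(2*c*(6*c+3)) by ring,
    Nat.mul_div_cancel_left _ (by norm_num : 0 < 3)]
  ring

set_option maxHeartbeats 1600000
set_option maxRecDepth 8000

/- ### The key mod-3 self-similarity -/

lemma main_claim (j : ℕ) : ∃ y : Polynomial (ZMod 3),
    (1+X)^(mSeq (j+1) - 1) = 1 + X*y ∧
    ∀ n : ℕ,
      S3 (gIter (mSeq (j+1)) n) = ((1+X)*(1+X*y)) * S3 n + (1+X*y+y) * S3 (n+1) ∧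
      S3 (gIter (mSeq (j+1)) n + 1)
        = (X*(1+X*y+y)) * S3 n + (X*(1+X*y)+2*y) * S3 (n+1) := by
  induction j with
  | zero =>
    refine ⟨0, by rw [show mSeq 1 - 1 = 0 by simp [mSeq], pow_zero]; ring, ?_⟩
    intro n
    rw [show mSeq 1 = 1 from rfl, show gIter 1 n = 4*n+1 from rfl]
    constructor
    · rw [S3_step1 n]; ring
    · rw [show 4*n+1+1 = 4*n+2 from rfl, S3_step2 n]; ring
  | succ j ih =>
    obtain ⟨y, hy, hp⟩ := ih
    have hM1 : mSeq (j+1) = 3*mSeq j + 1 := rfl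
    have hM2 : mSeq (j+2) = 3*mSeq (j+1) + 1 := rfl
    refine ⟨X^2*(1+y^3+X^3*y^3), ?_, ?_⟩
    · calc (1+X:Polynomial (ZMod 3))^(mSeq (j+2) - 1)
          = ((1+X)^(mSeq (j+1)-1) * (1+X))^3 := by
            rw [← pow_succ, show mSeq (j+1)-1+1 = mSeq (j+1) by omega, ← pow_mul,
              show mSeq (j+1)*3 = mSeq (j+2)-1 by omega]
      _ = ((1+X*y)*(1+X))^3 := by rw [hy]
      _ = 1 + X*(X^2*(1+y^3+X^3*y^3)) := by
            linear_combination (X + X*y + X^2 + 3*X^2*y + X^2*y^2 + 3*X^3*y + 3*X^3*y^2 + X^4*y + 3*X^4*y^2 + X^4*y^3 + X^5*y^2 + X^5*y^3 : Polynomial (ZMod 3)) * three_eq_zero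
    · intro n
      have hdec : mSeq (j+2) = mSeq (j+1) + (mSeq (j+1) + (mSeq (j+1) + 1)) := by omega
      rw [hdec, gIter_add, gIter_add, gIter_add, show gIter 1 n = 4*n+1 from rfl]
      constructor
      · rw [(hp (gIter (mSeq (j+1)) (gIter (mSeq (j+1)) (4*n+1)))).1,
          (hp (gIter (mSeq (j+1)) (4*n+1))).1, (hp (gIter (mSeq (j+1)) (4*n+1))).2,
          (hp (4*n+1)).1, (hp (4*n+1)).2,
          S3_step1 n, show 4*n+1+1 = 4*n+2 from rfl, S3_step2 n]
        linear_combination (2*X*(S3 (n+1)) + 2*X*(S3 n) + 4*X*y*(S3 (n+1)) + 4*X*y*(S3 n) + 4*X*y^2*(S3 (n+1)) + 4*X*y^2*(S3 n) + 2*X*y^3*(S3 (n+1)) + 2*X*y^3*(S3 n) + 3*X^2*(S3 (n+1)) + 5*X^2*(S3 n) + 12*X^2*y*(S3 (n+1)) + 15*X^2*y*(S3 n) + 11*X^2*y^2*(S3 (n+1)) + 13*X^2*y^2*(S3 n) + 4*X^2*y^3*(S3 (n+1)) + 5*X^2*y^3*(S3 n) + X^3*(S3 (n+1)) + 3*X^3*(S3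 n) + 11*X^3*y*(S3 (n+1)) + 18*X^3*y*(S3 n) + 18*X^3*y^2*(S3 (n+1)) + 24*X^3*y^2*(S3 n) + 7*X^3*y^3*(S3 (n+1)) + 9*X^3*y^3*(S3 n) + 4*X^4*y*(S3 (n+1)) + 10*X^4*y*(S3 n) + 12*X^4*y^2*(S3 (n+1)) + 21*X^4*y^2*(S3 n) + 8*X^4*y^3*(S3 (n+1)) + 11*X^4*y^3*(S3 n) + X^5*y*(S3 n) + 4*X^5*y^2*(S3 (n+1)) + 10*X^5*y^2*(S3 n) + 4*X^5*y^3*(S3 (n+1)) + 8*X^5*y^3*(S3 n) + X^6*y^2*(S3 n) + X^6*y^3*(S3 (n+1)) + 3*X^6*y^3*(S3 n) : Polynomial (ZMod 3)) * three_eq_zero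
      · rw [(hp (gIter (mSeq (j+1)) (gIter (mSeq (j+1)) (4*n+1)))).2,
          (hp (gIter (mSeq (j+1)) (4*n+1))).1, (hp (gIter (mSeq (j+1)) (4*n+1))).2,
          (hp (4*n+1)).1, (hp (4*n+1)).2,
          S3_step1 n, show 4*n+1+1 = 4*n+2 from rfl, S3_step2 n]
        linear_combination (X*y*(S3 (n+1)) + X*y*(S3 n) + 2*X*y^2*(S3 (n+1)) + 2*X*y^2*(S3 n) + 4*X*y^3*(S3 (n+1)) + 4*X*y^3*(S3 n) + X^2*(S3 (n+1)) + 2*X^2*(S3 n) + 7*X^2*y*(S3 (n+1)) + 8*X^2*y*(S3 n) + 12*X^2*y^2*(S3 (n+1)) + 14*X^2*y^2*(S3 n) + 3*X^2*y^3*(S3 (n+1)) + 5*X^2*y^3*(S3 n) + 2*X^3*(S3 (n+1)) + 3*X^3*(S3 n) + 10*X^3*y*(S3 (n+1)) + 15*X^3*y*(S3 n) + 14*X^3*y^2*(S3 (n+1)) + 19*X^3*y^2*(S3 n) + 11*X^3*y^3*(S3 (n+1)) + 13*X^3*y^3*(S3 n) + X^4*(S3 n) + 6*X^4*y*(S3 (n+1))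 + 11*X^4*y*(S3 n) + 15*X^4*y^2*(S3 (n+1)) + 24*X^4*y^2*(S3 n) + 7*X^4*y^3*(S3 (n+1)) + 11*X^4*y^3*(S3 n) + X^5*y*(S3 (n+1)) + 4*X^5*y*(S3 n) + 6*X^5*y^2*(S3 (n+1)) + 12*X^5*y^2*(S3 n) + 6*X^5*y^3*(S3 (n+1)) + 11*X^5*y^3*(S3 n) + X^6*y^2*(S3 (n+1)) + 4*X^6*y^2*(S3 n) + 2*X^6*y^3*(S3 (n+1)) + 4*X^6*y^3*(S3 n) + X^7*y^3*(S3 n) : Polynomial (ZMod 3)) * three_eq_zero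

/- ### Combining divisibility by X, X+1 and 3 -/

lemma dvd_combine (f : Polynomial ℤ) (h0 : f.eval 0 = 0) (h1 : f.eval (-1) = 0)
    (h3 : f.map (Int.castRingHom (ZMod 3)) = 0) : (3*X*(X+1) : Polynomial ℤ) ∣ f := by
  have hx : (X : Polynomial ℤ) ∣ f := by
    rw [Polynomial.X_dvd_iff, Polynomial.coeff_zero_eq_eval_zero, h0]
  have hx1 : (X+1 : Polynomial ℤ) ∣ f := by
    have h : (X - Polynomial.C (-1) : Polynomial ℤ) ∣ f := (Polynomial.dvd_iff_isRoot).2 h1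
    have e : (X - Polynomial.C (-1) : Polynomial ℤ) = X + 1 := by
      rw [map_neg, map_one, sub_neg_eq_add]
    rwa [e] at h
  have hcop : IsCoprime (X : Polynomial ℤ) (X+1) := ⟨-1, 1, by ring⟩
  obtain ⟨g, hg⟩ := hcop.mul_dvd hx hx1
  have hmapg : g.map (Int.castRingHom (ZMod 3)) = 0 := by
    have h2 := congrArg (Polynomial.map (Int.castRingHom (ZMod 3))) hg
    rw [h3, Polynomial.map_mul, Polynomial.map_mul, Polynomial.map_X, Polynomial.map_add,
      Polynomial.map_X, Polynomial.map_one] at h2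
    have hne : (X*(X+1) : Polynomial (ZMod 3)) ≠ 0 := by
      have hmon : (X*(X+1) : Polynomial (ZMod 3)).Monic :=
        (Polynomial.monic_X).mul (by simpa using Polynomial.monic_X_add_C (1:ZMod 3))
      exact hmon.ne_zero
    rcases mul_eq_zero.1 h2.symm with h | h
    · exact absurd h hne
    · exact h
  have hCg : (Polynomial.C (3:ℤ)) ∣ g := by
    rw [Polynomial.C_dvd_iff_dvd_coeff]
    intro k
    have hk : ((g.coeff k : ℤ) : ZMod 3) = 0 := by
      have := congrArg (fun p => Polynomial.coeff p k) hmapg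
      simpa [Polynomial.coeff_map] using this
    exact_mod_cast (ZMod.intCast_zmod_eq_zero_iff_dvd _ 3).1 hk
  obtain ⟨g', rfl⟩ := hCg
  refine ⟨g', ?_⟩
  rw [hg, show (Polynomial.C (3:ℤ)) = 3 from map_ofNat _ 3]
  ring

/- ### Main theorem -/

theorem stern_h_congruent_one (n : ℕ) :
    (3 * X * (X + 1) : Polynomial ℤ) ∣ sternPoly (hSeq ((3 ^ n - 1) / 2)) - 1 := by
  have hmn : (3^n - 1)/2 = mSeq n := by have := mSeq_pow n; omega
  rw [hmn]
  match n with
  | 0 =>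
    rw [show mSeq 0 = 0 from rfl, show hSeq 0 = 1 from by decide, st1]
    simp
  | 1 =>
    rw [show mSeq 1 = 1 from rfl, show hSeq 1 = 19 from by decide]
    have s3 : sternPoly 3 = 1 + X := by
      rw [show (3:ℕ) = 2*1+1 from rfl, sternPoly_odd 1 one_ne_zero, st1, st2]
    have s4 : sternPoly 4 = X^2 := by
      rw [show (4:ℕ) = 2*2 from rfl, sternPoly_two_mul 2 (by omega), st2]; ring
    have s5 : sternPoly 5 = 1 + 2*X := by
      rw [show (5:ℕ) = 2*2+1 from rfl, sternPoly_odd 2 (by omega), st2, show (2:ℕ)+1 = 3 from rfl, s3]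
      ring
    have s9 : sternPoly 9 = 1+2*X+X^2 := by
      rw [show (9:ℕ) = 2*4+1 from rfl, sternPoly_odd 4 (by omega), s4, show (4:ℕ)+1 = 5 from rfl, s5]
      ring
    have s10 : sternPoly 10 = X + 2*X^2 := by
      rw [show (10:ℕ) = 2*5 from rfl, sternPoly_two_mul 5 (by omega), s5]; ring
    have s19 : sternPoly 19 = 1 + 3*X + 3*X^2 := by
      rw [show (19:ℕ) = 2*9+1 from rfl, sternPoly_odd 9 (by omega), s9, show (9:ℕ)+1 = 10 from rfl, s10]
      ring
    exact ⟨1, by rw [s19]; ring⟩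
  | (k+2) =>
    obtain ⟨y, hy, hp⟩ := main_claim k
    set M := mSeq (k+1) with hMdef
    have hMrec : mSeq (k+2) = 3*M+1 := rfl
    obtain ⟨a, ha⟩ := four_pow (3*M)
    have htrip : ∀ nn : ℕ, 3 * gIter M (gIter M (gIter M nn)) + 1 = 4^(3*M) * (3*nn+1) := by
      intro nn
      rw [← gIter_add, ← gIter_add, show M + M + M = 3*M by ring]
      exact gIter_formula (3*M) nn
    set i1 := gIter M (gIter M (gIter M 1)) with hi1def
    have hI1 : 3*i1 + 1 = (3*a+1) * 4 := by
      rw [hi1def, htrip 1, ha]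
    have hi1v : i1 = 4*a+1 := by omega
    set i3 := gIter M (gIter M (gIter M (2*i1))) with hi3def
    have hI3 : 3*i3+1 = 72*(a*a)+45*a+7 := by
      rw [hi3def, htrip (2*i1), ha, hi1v]; ring
    have hc : 2^(2*(3*M+1)) = 3*(4*a+1)+1 := by
      rw [pow_mul, show (2:ℕ)^2 = 4 from rfl, pow_succ, ha]; ring
    have hgoal : hSeq (mSeq (k+2)) = 192*(a*a) + 120*a + 19 := by
      rw [hMrec, hSeq_closed (3*M+1) (4*a+1) hc]; ring
    obtain ⟨q, hq⟩ : ∃ q, q = a*a := ⟨_, rfl⟩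
    rw [← hq] at hI3 hgoal
    have hidx : hSeq (mSeq (k+2)) = 2*(2*(2*i3)+1)+1 := by omega
    have hi3pos : 1 ≤ i3 := by omega
    have hi1pos : 1 ≤ i1 := by omega
    have hS : S3 (hSeq (mSeq (k+2))) = 1 := by
      rw [hidx, S3_odd (2*(2*i3)+1) (by omega),
        show 2*(2*i3)+1+1 = 2*(2*i3+1) by ring,
        S3_even (2*i3+1) (by omega), S3_odd (2*i3) (by omega),
        S3_even i3 (by omega), S3_odd i3 (by omega), hi3def,
        (hp (gIter M (gIter M (2*i1)))).1, (hp (gIter M (gIter M (2*i1)))).2,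
        (hp (gIter M (2*i1))).1, (hp (gIter M (2*i1))).2,
        (hp (2*i1)).1, (hp (2*i1)).2,
        S3_even i1 (by omega), S3_odd i1 (by omega), hi1def,
        (hp (gIter M (gIter M 1))).1, (hp (gIter M (gIter M 1))).2,
        (hp (gIter M 1)).1, (hp (gIter M 1)).2,
        (hp 1).1, (hp 1).2, show (1:ℕ)+1 = 2 from rfl, S3_one, S3_two]
      linear_combination (y + 2*y^2 + 4*y^3 + 5*X + 21*X*y + 51*X*y^2 + 91*X*y^3 + 114*X*y^4 + 108*X*y^5 + 72*X*y^6 + 31*X^2 + 162*X^2*y + 438*X^2*y^2 + 779*X^2*y^3 + 975*X^2*y^4 + 774*X^2*y^5 + 258*X^2*y^6 + 103*X^3 + 636*X^3*y + 1836*X^3*y^2 + 3232*X^3*y^3 + 3637*X^3*y^4 + 2411*X^3*y^5 + 754*X^3*y^6 + 199*X^4 + 1445*X^4*y + 4481*X^4*y^2 + 7961*X^4*y^3 + 8617*X^4*y^4 + 5467*X^4*y^5 + 1557*X^4*y^6 + 227*X^5 + 2027*X^5*y + 7094*X^5*y^2 + 13386*X^5*y^3 + 14876*X^5*y^4 + 9279*X^5*y^5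 + 2564*X^5*y^6 + 148*X^6 + 1805*X^6*y + 7700*X^6*y^2 + 16298*X^6*y^3 + 19260*X^6*y^4 + 12442*X^6*y^5 + 3477*X^6*y^6 + 50*X^7 + 996*X^7*y + 5707*X^7*y^2 + 14540*X^7*y^3 + 19237*X^7*y^4 + 13292*X^7*y^5 + 3848*X^7*y^6 + 7*X^8 + 309*X^8*y + 2763*X^8*y^2 + 9318*X^8*y^3 + 14705*X^8*y^4 + 11349*X^8*y^5 + 3542*X^8*y^6 + 42*X^9*y + 795*X^9*y^2 + 4052*X^9*y^3 + 8357*X^9*y^4 + 7649*X^9*y^5 + 2658*X^9*y^6 + 105*X^10*y^2 + 1090*X^10*y^3 + 3318*X^10*y^4 + 3925*X^10*y^5 + 1612*X^10*y^6 + 140*X^11*y^3 + 840*X^11*y^4 + 1440*X^11*y^5 + 757*X^11*y^6 + 105*X^12*y^4 + 345*X^12*y^5 + 259*X^12*y^6 + 42*X^13*y^5 + 59*X^13*y^6 + 7*X^14*y^6 : Polynomial (ZMod 3)) * three_eq_zero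
    apply dvd_combine
    · rw [Polynomial.eval_sub, sternPoly_eval_zero, if_pos (by omega), Polynomial.eval_one]
      ring
    · rw [Polynomial.eval_sub, sternPoly_eval_neg_one, if_neg (by omega), if_pos (by omega),
        Polynomial.eval_one]
      ring
    · rw [Polynomial.map_sub, Polynomial.map_one]
      show S3 (hSeq (mSeq (k+2))) - 1 = 0
      rw [hS]; ring
end
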